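/- arXiv:2110.07162 — 5 statements merged into one kernel-verified Lean document; each statement's English description precedes it below -/
import Mathlib

section
/- Let m ≥ 1 be an integer. There exist constants c > 0 and c' > 0 such that for every t > 0 and every X ∈ ℝ^m with 1 ≤ ‖X‖ ≤ 5, | ∫_{{z ∈ ℝ^m : ‖z‖ ≤ ‖X‖/10}} (z₁/‖z‖^{m+1}) · ( e^{−‖X−z‖²/(4t)} − e^{−‖X‖²/(4t)} ) dz | ≤ c · e^{−c'/t}. (In particular the integrand is absolutely integrable on this ball, because the difference of the two Gaussians is O(‖z‖) near z = 0.) -/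
/-!
Near the singularity the two Gaussians differ by `O(‖z‖ / t)`, and since `‖X - z‖` and
`‖X‖` both stay above `9/10`, that difference also carries the factor `exp (-1 / (8 t))`.
Hence the integrand is dominated by `t⁻¹ exp (-1 / (8 t)) ‖z‖ ^ (1 - m)`, which is integrable
on the ball, and `t⁻¹ exp (-1 / (8 t)) ≲ exp (-1 / (16 t))` because `s ↦ s exp (-s)` is
bounded.
-/

open MeasureTheory Real

lemma abs_exp_neg_sub_exp_neg_le {a b M : ℝ} (ha : M ≤ a) (hb : M ≤ b) :
    |exp (-a) - exp (-b)| ≤ |a - b| * exp (-M) := by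
  wlog hab : a ≤ b generalizing a b
  · rw [abs_sub_comm, abs_sub_comm a]
    exact this hb ha (le_of_not_ge hab)
  have hsplit : exp (-a) - exp (-b) = exp (-a) * (1 - exp (-(b - a))) := by
    rw [mul_sub, ← exp_add]; ring_nf
  rw [abs_of_nonneg (sub_nonneg.2 (exp_le_exp.2 (neg_le_neg hab))), abs_sub_comm,
    abs_of_nonneg (sub_nonneg.2 hab), hsplit, mul_comm (b - a)]
  exact mul_le_mul (exp_le_exp.2 (by linarith)) (by linarith [one_sub_le_exp_neg (b - a)])
    (sub_nonneg.2 (exp_le_one_iff.2 (by linarith))) (exp_nonneg _)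

lemma inv_mul_exp_neg_two_mul_div_le {a t : ℝ} (ha : 0 < a) (ht : 0 < t) :
    t⁻¹ * exp (-(2 * a) / t) ≤ a⁻¹ * exp (-a / t) := by
  have hbdd : a / t * exp (-(a / t)) ≤ 1 :=
    (mul_exp_neg_le_exp_neg_one _).trans (exp_le_one_iff.2 (by norm_num))
  calc t⁻¹ * exp (-(2 * a) / t) = a⁻¹ * (a / t * exp (-(a / t))) * exp (-a / t) := by
        rw [show -(2 * a) / t = -(a / t) + -a / t by ring, exp_add]
        field_simp
    _ ≤ a⁻¹ * 1 * exp (-a / t) := by gcongr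
    _ = a⁻¹ * exp (-a / t) := by rw [mul_one]

section InnerProductSpace

variable {E : Type*} [NormedAddCommGroup E] [InnerProductSpace ℝ E]

lemma abs_norm_sub_sq_sub_norm_sq_le (X z : E) :
    |‖X - z‖ ^ 2 - ‖X‖ ^ 2| ≤ ‖z‖ * (2 * ‖X‖ + ‖z‖) := by
  rw [norm_sub_sq_real, abs_le]
  have hinner := abs_le.1 (abs_real_inner_le_norm X z)
  constructor <;> nlinarith [hinner.1, hinner.2]

lemma abs_exp_neg_norm_sub_sq_sub_le {X z : E} {t : ℝ} (ht : 0 < t) (hX₁ : 1 ≤ ‖X‖)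
    (hX₅ : ‖X‖ ≤ 5) (hz : ‖z‖ ≤ ‖X‖ / 10) :
    |exp (-‖X - z‖ ^ 2 / (4 * t)) - exp (-‖X‖ ^ 2 / (4 * t))| ≤
      11 * ‖z‖ / (4 * t) * exp (-(1 / 8) / t) := by
  have hXz : 9 / 10 ≤ ‖X - z‖ := by linarith [norm_sub_norm_le X z]
  have hlow : ∀ s : ℝ, 9 / 10 ≤ s → 1 / 8 / t ≤ s ^ 2 / (4 * t) := fun s hs => by
    rw [show 1 / 8 / t = 1 / 2 / (4 * t) by field_simp; norm_num]
    gcongr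
    nlinarith
  have hdiff : |‖X - z‖ ^ 2 / (4 * t) - ‖X‖ ^ 2 / (4 * t)| ≤ 11 * ‖z‖ / (4 * t) := by
    rw [← sub_div, abs_div, abs_of_pos (by positivity : (0 : ℝ) < 4 * t)]
    gcongr
    refine (abs_norm_sub_sq_sub_norm_sq_le X z).trans ?_
    nlinarith [norm_nonneg z]
  rw [neg_div, neg_div, neg_div]
  exact (abs_exp_neg_sub_exp_neg_le (hlow _ hXz) (hlow _ (by linarith))).trans
    (mul_le_mul_of_nonneg_right hdiff (exp_nonneg _))

end InnerProductSpace

lemma abs_div_pow_succ_mul_le_rpow {a r : ℝ} (hr : 0 ≤ r) (ha : |a| ≤ r) (n : ℕ) :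
    |a / r ^ (n + 1)| * r ≤ r ^ (-((n : ℝ) - 1)) := by
  rcases hr.eq_or_lt with rfl | hr
  · simpa using rpow_nonneg le_rfl _
  rw [show -((n : ℝ) - 1) = ((2 : ℕ) : ℝ) - ((n + 1 : ℕ) : ℝ) by push_cast; ring,
    rpow_sub hr, rpow_natCast, rpow_natCast, abs_div, abs_of_pos (pow_pos hr _),
    div_mul_eq_mul_div]
  gcongr
  nlinarith [abs_nonneg a]

lemma integrableOn_ball_norm_rpow_neg {E : Type*} [NormedAddCommGroup E] [NormedSpace ℝ E]
    [FiniteDimensional ℝ E] [MeasurableSpace E] [BorelSpace E] {μ : Measure E}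
    [μ.IsAddHaarMeasure] (hd : 1 ≤ Module.finrank ℝ E) {α : ℝ}
    (hα : α < Module.finrank ℝ E) (r : ℝ) :
    IntegrableOn (fun x : E => ‖x‖ ^ (-α)) (Metric.ball 0 r) μ :=
  integrableOn_ball_of_norm_le_rpow (C := 1) hd hα
    (ae_of_all _ fun x => by rw [one_mul, norm_of_nonneg (rpow_nonneg (norm_nonneg x) _)])
    (measurable_norm.pow_const _).aestronglyMeasurable

lemma norm_coord_div_mul_heat_sub_le {m : ℕ} (i : Fin m) {X z : EuclideanSpace ℝ (Fin m)}
    {t : ℝ} (ht : 0 < t) (hX₁ : 1 ≤ ‖X‖) (hX₅ : ‖X‖ ≤ 5) (hz : ‖z‖ ≤ ‖X‖ / 10) :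
    ‖(z i / ‖z‖ ^ (m + 1)) * (exp (-‖X - z‖ ^ 2 / (4 * t)) - exp (-‖X‖ ^ 2 / (4 * t)))‖ ≤
      44 * exp (-(1 / 16) / t) * ‖z‖ ^ (-((m : ℝ) - 1)) := by
  have hdecay : 11 / (4 * t) * exp (-(1 / 8) / t) ≤ 44 * exp (-(1 / 16) / t) := by
    calc 11 / (4 * t) * exp (-(1 / 8) / t)
      _ = 11 / 4 * (t⁻¹ * exp (-(2 * (1 / 16)) / t)) := by
        rw [show 2 * (1 / 16 : ℝ) = 1 / 8 by norm_num]; ring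
      _ ≤ 11 / 4 * ((1 / 16)⁻¹ * exp (-(1 / 16) / t)) := by
        gcongr 11 / 4 * ?_; exact inv_mul_exp_neg_two_mul_div_le (by norm_num) ht
      _ = 44 * exp (-(1 / 16) / t) := by ring
  rw [norm_mul, Real.norm_eq_abs, Real.norm_eq_abs]
  calc _ ≤ |z i / ‖z‖ ^ (m + 1)| * (11 * ‖z‖ / (4 * t) * exp (-(1 / 8) / t)) := by
        gcongr; exact abs_exp_neg_norm_sub_sq_sub_le ht hX₁ hX₅ hz
    _ = 11 / (4 * t) * exp (-(1 / 8) / t) * (|z i / ‖z‖ ^ (m + 1)| * ‖z‖) := by ring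
    _ ≤ _ := mul_le_mul hdecay
        (abs_div_pow_succ_mul_le_rpow (norm_nonneg z) (PiLp.norm_apply_le z i) m)
        (by positivity) (by positivity)

theorem stmt1 (m : ℕ) (hm : 0 < m) :
    ∃ c c' : ℝ, 0 < c ∧ 0 < c' ∧ ∀ t : ℝ, 0 < t → ∀ X : EuclideanSpace ℝ (Fin m),
      1 ≤ ‖X‖ → ‖X‖ ≤ 5 →
      |∫ z in {z : EuclideanSpace ℝ (Fin m) | ‖z‖ ≤ ‖X‖ / 10},
          (z ⟨0, hm⟩ / ‖z‖ ^ (m + 1)) *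
            (Real.exp (-‖X - z‖ ^ 2 / (4 * t)) - Real.exp (-‖X‖ ^ 2 / (4 * t)))| ≤
        c * Real.exp (-c' / t) := by
  set w : EuclideanSpace ℝ (Fin m) → ℝ := fun z => ‖z‖ ^ (-((m : ℝ) - 1))
  have hw : IntegrableOn w (Metric.ball 0 1) :=
    integrableOn_ball_norm_rpow_neg (by rwa [finrank_euclideanSpace_fin]) (by simp) 1
  obtain ⟨K, hK⟩ : ∃ K, ∫ z in Metric.ball 0 1, w z = K := ⟨_, rfl⟩
  have hK₀ : 0 ≤ K := hK ▸ setIntegral_nonneg measurableSet_ball fun z _ => by positivity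
  refine ⟨44 * (K + 1), 1 / 16, by positivity, by norm_num, fun t ht X hX₁ hX₅ => ?_⟩
  set S := {z : EuclideanSpace ℝ (Fin m) | ‖z‖ ≤ ‖X‖ / 10}
  have hS : S ⊆ Metric.ball 0 1 := fun z hz => by
    rw [mem_ball_zero_iff]; exact hz.out.trans_lt (by linarith)
  set C := 44 * exp (-(1 / 16) / t)
  calc _ ≤ ∫ z in S, C * w z :=
        norm_integral_le_of_norm_le ((hw.mono_set hS).const_mul C)
          (ae_restrict_of_forall_mem (measurableSet_le measurable_norm measurable_const)
            fun z hz => norm_coord_div_mul_heat_sub_le _ ht hX₁ hX₅ hz)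
    _ = C * ∫ z in S, w z := integral_const_mul _ _
    _ ≤ C * (K + 1) := by
        gcongr
        exact (hK ▸ setIntegral_mono_set hw (ae_of_all _ fun z => by positivity)
          hS.eventuallyLE).trans (by linarith)
    _ = 44 * (K + 1) * exp (-(1 / 16) / t) := by ring
end

section
/- Let m ≥ 1 be an integer. There exists a constant c > 0 such that for every t > 0 and every X ∈ ℝ^m with 1 ≤ ‖X‖ ≤ 5, | ∫_{{z ∈ ℝ^m : ‖z‖ ≤ ‖X‖/(10√t)}} e^{−‖z‖²} · ( (X₁ − 2√t·z₁)/‖X − 2√t·z‖^{m+1} − X₁/‖X‖^{m+1} ) dz | ≤ c · t^{1/2}. -/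
/-!
Put `Y = X - 2√t z`. On the domain of integration `‖Y - X‖ = 2√t ‖z‖ ≤ ‖X‖ / 5`, so `X` and `Y`
both lie in the annulus `4/5 ≤ ‖·‖ ≤ 6`, on which `Y ↦ Y₁ / ‖Y‖^k` is Lipschitz. The integrand is
therefore bounded by a constant times `√t ‖z‖ e^{-‖z‖²} ≤ √t e^{-‖z‖²/2}`, which is integrable over
all of `ℝ^m`.
-/

open MeasureTheory Real Filter Set

lemma integrable_exp_neg_mul_sq_norm {V : Type*} [NormedAddCommGroup V] [InnerProductSpace ℝ V]
    [FiniteDimensional ℝ V] [MeasurableSpace V] [BorelSpace V] {b : ℝ} (hb : 0 < b) :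
    Integrable (fun v : V => exp (-b * ‖v‖ ^ 2)) := by
  refine (GaussianFourier.integrable_cexp_neg_mul_sq_norm_add (V := V) (b := b)
    (by simpa using hb) 0 0).norm.congr (.of_forall fun v => ?_)
  simp [Complex.norm_exp, ← Complex.ofReal_pow]

lemma mul_exp_neg_sq_le {r : ℝ} (hr : 0 ≤ r) : r * exp (-r ^ 2) ≤ exp (-2⁻¹ * r ^ 2) := by
  have hsplit : exp (-r ^ 2) = exp (-2⁻¹ * r ^ 2) * exp (-2⁻¹ * r ^ 2) := by
    rw [← exp_add]; ring_nf
  have hr_le : r * exp (-2⁻¹ * r ^ 2) ≤ 1 := by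
    rw [neg_mul, exp_neg, mul_inv_le_iff₀ (exp_pos _), one_mul]
    nlinarith [add_one_le_exp (2⁻¹ * r ^ 2)]
  calc r * exp (-r ^ 2) = r * exp (-2⁻¹ * r ^ 2) * exp (-2⁻¹ * r ^ 2) := by rw [hsplit, mul_assoc]
    _ ≤ exp (-2⁻¹ * r ^ 2) := mul_le_of_le_one_left (exp_pos _).le hr_le

lemma abs_norm_pow_sub_norm_pow_le {E : Type*} [SeminormedAddCommGroup E] {x y : E} {R : ℝ}
    (hx : ‖x‖ ≤ R) (hy : ‖y‖ ≤ R) (k : ℕ) :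
    |‖x‖ ^ k - ‖y‖ ^ k| ≤ k * R ^ (k - 1) * ‖x - y‖ := by
  calc |‖x‖ ^ k - ‖y‖ ^ k| ≤ |‖x‖ - ‖y‖| * k * max |‖x‖| |‖y‖| ^ (k - 1) := abs_pow_sub_pow_le ..
    _ ≤ ‖x - y‖ * k * R ^ (k - 1) := by
        gcongr
        · exact abs_norm_sub_norm_le x y
        · simpa using ⟨hx, hy⟩
    _ = k * R ^ (k - 1) * ‖x - y‖ := by ring

lemma abs_apply_div_norm_pow_sub_le {ι : Type*} [Fintype ι] {X Y : EuclideanSpace ℝ ι}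
    {r R : ℝ} (hr : 0 < r) (hXr : r ≤ ‖X‖) (hYr : r ≤ ‖Y‖) (hXR : ‖X‖ ≤ R) (hYR : ‖Y‖ ≤ R)
    (k : ℕ) (i : ι) :
    |Y i / ‖Y‖ ^ k - X i / ‖X‖ ^ k| ≤ (k + 1) * R ^ k / r ^ (2 * k) * ‖Y - X‖ := by
  have hR : 0 ≤ R := hr.le.trans (hXr.trans hXR)
  have hA : r ^ k ≤ ‖Y‖ ^ k := by gcongr
  have hB : r ^ k ≤ ‖X‖ ^ k := by gcongr
  have hApos : 0 < ‖Y‖ ^ k := (pow_pos hr k).trans_le hA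
  have hBpos : 0 < ‖X‖ ^ k := (pow_pos hr k).trans_le hB
  have hcoord : |Y i - X i| ≤ ‖Y - X‖ := by simpa using PiLp.norm_apply_le (Y - X) i
  have hXi : |X i| ≤ R := (PiLp.norm_apply_le X i).trans hXR
  have hpow : |‖X‖ ^ k - ‖Y‖ ^ k| ≤ k * R ^ (k - 1) * ‖Y - X‖ := by
    simpa [norm_sub_rev] using abs_norm_pow_sub_norm_pow_le hXR hYR k
  have hRk : R * (k * R ^ (k - 1)) ≤ k * R ^ k := by
    rcases Nat.eq_zero_or_pos k with rfl | hk
    · simp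
    · rw [mul_left_comm, mul_pow_sub_one hk.ne']
  have hnum : |(Y i - X i) * ‖X‖ ^ k + X i * (‖X‖ ^ k - ‖Y‖ ^ k)| ≤ (k + 1) * R ^ k * ‖Y - X‖ :=
    calc _ ≤ |Y i - X i| * ‖X‖ ^ k + |X i| * |‖X‖ ^ k - ‖Y‖ ^ k| := by
          simpa [abs_mul, abs_of_pos hBpos] using
            abs_add_le ((Y i - X i) * ‖X‖ ^ k) (X i * (‖X‖ ^ k - ‖Y‖ ^ k))
      _ ≤ ‖Y - X‖ * R ^ k + R * (k * R ^ (k - 1) * ‖Y - X‖) := by gcongr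
      _ ≤ (k + 1) * R ^ k * ‖Y - X‖ := by nlinarith [norm_nonneg (Y - X)]
  calc |Y i / ‖Y‖ ^ k - X i / ‖X‖ ^ k|
      = |(Y i - X i) * ‖X‖ ^ k + X i * (‖X‖ ^ k - ‖Y‖ ^ k)| / (‖Y‖ ^ k * ‖X‖ ^ k) := by
        rw [div_sub_div _ _ hApos.ne' hBpos.ne', abs_div, abs_of_pos (mul_pos hApos hBpos)]
        ring_nf
    _ ≤ (k + 1) * R ^ k * ‖Y - X‖ / (r ^ k * r ^ k) := by gcongr
    _ = (k + 1) * R ^ k / r ^ (2 * k) * ‖Y - X‖ := by ring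

lemma abs_gaussian_mul_kernel_sub_le {ι : Type*} [Fintype ι] {X z : EuclideanSpace ℝ ι} {s : ℝ}
    (hs : 0 < s) (hX1 : 1 ≤ ‖X‖) (hX5 : ‖X‖ ≤ 5) (hz : ‖z‖ ≤ ‖X‖ / (10 * s)) (k : ℕ) (i : ι) :
    |exp (-‖z‖ ^ 2) * ((X i - 2 * s * z i) / ‖X - (2 * s) • z‖ ^ k - X i / ‖X‖ ^ k)| ≤
      2 * ((k + 1) * 6 ^ k / (4 / 5) ^ (2 * k)) * s * exp (-2⁻¹ * ‖z‖ ^ 2) := by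
  set Y := X - (2 * s) • z
  have hYX : ‖Y - X‖ = 2 * s * ‖z‖ := by
    simp [Y, norm_smul, abs_of_pos hs]
  have hYX_le : ‖Y - X‖ ≤ ‖X‖ / 5 := by
    rw [hYX]
    calc 2 * s * ‖z‖ ≤ 2 * s * (‖X‖ / (10 * s)) := by gcongr
      _ = ‖X‖ / 5 := by field_simp; ring
  have hY := abs_le.mp (abs_norm_sub_norm_le Y X)
  have hLip := abs_apply_div_norm_pow_sub_le (X := X) (Y := Y) (r := 4 / 5) (R := 6)
    (by norm_num) (by linarith) (by linarith) (by linarith) (by linarith) k i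
  have hYi : Y i = X i - 2 * s * z i := by simp [Y]
  calc _ = exp (-‖z‖ ^ 2) * |Y i / ‖Y‖ ^ k - X i / ‖X‖ ^ k| := by
        rw [abs_mul, abs_of_pos (exp_pos _), hYi]
    _ ≤ exp (-‖z‖ ^ 2) * ((k + 1) * 6 ^ k / (4 / 5) ^ (2 * k) * ‖Y - X‖) := by gcongr
    _ = 2 * ((k + 1) * 6 ^ k / (4 / 5) ^ (2 * k)) * s * (‖z‖ * exp (-‖z‖ ^ 2)) := by
        rw [hYX]; ring
    _ ≤ _ := by gcongr; exact mul_exp_neg_sq_le (norm_nonneg z)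

theorem stmt3 (m : ℕ) (hm : 0 < m) :
    ∃ c : ℝ, 0 < c ∧ ∀ t : ℝ, 0 < t → ∀ X : EuclideanSpace ℝ (Fin m),
      1 ≤ ‖X‖ → ‖X‖ ≤ 5 →
      |∫ z in {z : EuclideanSpace ℝ (Fin m) | ‖z‖ ≤ ‖X‖ / (10 * Real.sqrt t)},
          Real.exp (-‖z‖ ^ 2) *
            ((X ⟨0, hm⟩ - 2 * Real.sqrt t * z ⟨0, hm⟩) /
                ‖X - (2 * Real.sqrt t) • z‖ ^ (m + 1) -
              X ⟨0, hm⟩ / ‖X‖ ^ (m + 1))| ≤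
        c * Real.sqrt t := by
  set C : ℝ := 2 * ((↑(m + 1) + 1) * 6 ^ (m + 1) / (4 / 5) ^ (2 * (m + 1)))
  set g : EuclideanSpace ℝ (Fin m) → ℝ := fun z => exp (-2⁻¹ * ‖z‖ ^ 2)
  have hg : Integrable g := integrable_exp_neg_mul_sq_norm (by norm_num)
  refine ⟨C * (∫ z, g z) + 1, by positivity, fun t ht X hX1 hX5 => ?_⟩
  have hs : 0 < √t := sqrt_pos.mpr ht
  have hS : MeasurableSet {z : EuclideanSpace ℝ (Fin m) | ‖z‖ ≤ ‖X‖ / (10 * √t)} :=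
    measurableSet_le measurable_norm measurable_const
  calc _ ≤ ∫ z in {z | ‖z‖ ≤ ‖X‖ / (10 * √t)}, C * √t * g z := by
        rw [← Real.norm_eq_abs]
        refine norm_integral_le_of_norm_le (hg.const_mul _).restrict ?_
        refine (ae_restrict_iff' hS).mpr (.of_forall fun z hz => ?_)
        exact (Real.norm_eq_abs _).trans_le <|
          abs_gaussian_mul_kernel_sub_le hs hX1 hX5 hz (m + 1) ⟨0, hm⟩
    _ ≤ ∫ z, C * √t * g z :=
        setIntegral_le_integral (hg.const_mul _) (.of_forall fun z => by positivity)
    _ ≤ (C * (∫ z, g z) + 1) * √t := by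
        rw [integral_const_mul, add_mul, one_mul, mul_right_comm]
        exact le_add_of_nonneg_right hs.le
end

section
/- There exists a constant c > 0 such that for all x > 0 and t > 0, ∫₀ᵗ u^{−1} e^{−x²/(4u)} | 1 − x²/u | du ≤ c · ( 1 + | log(x²/t) | ). -/
open MeasureTheory Real Set

/-! Write `a = x²` and `z = a / u`. The integrand equals `z e^{-z/4} |1 - z| / a`, which is at
most `32 / a` because `z (1 + z) ≤ 32 e^{z/4}`; for `u ≥ a` it is also at most `1 / u`. The first
bound contributes at most `32` on `(0, min t a)`, the second `log (t / a) = -log (a / t)` on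
`(a, t)`. -/

noncomputable def heatIntegrand (a u : ℝ) : ℝ := u⁻¹ * exp (-a / (4 * u)) * |1 - a / u|

lemma mul_one_add_le_exp_div_four {z : ℝ} (hz : 0 ≤ z) : z * (1 + z) ≤ 32 * exp (z / 4) := by
  nlinarith [quadratic_le_exp_of_nonneg (div_nonneg hz zero_le_four)]

lemma heatIntegrand_le_const {a u : ℝ} (ha : 0 < a) (hu : 0 < u) : heatIntegrand a u ≤ 32 / a := by
  set z := a / u with hz
  have hz0 : 0 ≤ z := by positivity
  have hinv : u⁻¹ = z / a := by rw [hz]; field_simp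
  have hexp : -a / (4 * u) = -(z / 4) := by rw [hz]; ring
  calc heatIntegrand a u = z * exp (-(z / 4)) * |1 - z| / a := by
        rw [heatIntegrand, hinv, hexp]; ring
    _ ≤ z * exp (-(z / 4)) * (1 + z) / a := by
        gcongr
        exact (abs_sub _ _).trans_eq (by rw [abs_one, abs_of_nonneg hz0])
    _ = z * (1 + z) * exp (-(z / 4)) / a := by ring
    _ ≤ 32 * exp (z / 4) * exp (-(z / 4)) / a := by
        gcongr ?_ * _ / _; exact mul_one_add_le_exp_div_four hz0
    _ = 32 / a := by rw [mul_assoc, ← exp_add, add_neg_cancel, exp_zero, mul_one]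

lemma heatIntegrand_le_inv {a u : ℝ} (ha : 0 ≤ a) (hu : 0 < u) (hau : a ≤ u) :
    heatIntegrand a u ≤ u⁻¹ := by
  have hz : a / u ≤ 1 := div_le_one_of_le₀ hau hu.le
  have habs : |1 - a / u| ≤ 1 := by
    rw [abs_of_nonneg (by linarith)]; linarith [div_nonneg ha hu.le]
  have hexp : exp (-a / (4 * u)) ≤ 1 := exp_le_one_iff.mpr (by
    rw [neg_div]; exact neg_nonpos.mpr (by positivity))
  calc heatIntegrand a u ≤ u⁻¹ * 1 * 1 := by
        unfold heatIntegrand; gcongr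
    _ = u⁻¹ := by ring

lemma intervalIntegrable_heatIntegrand_zero {a s : ℝ} (ha : 0 < a) (hs : 0 ≤ s) :
    IntervalIntegrable (heatIntegrand a) volume 0 s := by
  rw [intervalIntegrable_iff_integrableOn_Ioc_of_le hs]
  refine Measure.integrableOn_of_bounded (M := 32 / a) measure_Ioc_lt_top.ne
    (by unfold heatIntegrand; fun_prop) ?_
  refine (ae_restrict_iff' measurableSet_Ioc).mpr (ae_of_all _ fun u hu => ?_)
  have hu0 := hu.1
  rw [Real.norm_of_nonneg (by unfold heatIntegrand; positivity)]
  exact heatIntegrand_le_const ha hu0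

lemma intervalIntegrable_heatIntegrand {a s₁ s₂ : ℝ} (ha : 0 < a) (hs₁ : 0 ≤ s₁) (hs₂ : 0 ≤ s₂) :
    IntervalIntegrable (heatIntegrand a) volume s₁ s₂ :=
  (intervalIntegrable_heatIntegrand_zero ha hs₁).symm.trans
    (intervalIntegrable_heatIntegrand_zero ha hs₂)

lemma integral_heatIntegrand_le_mul {a s : ℝ} (ha : 0 < a) (hs : 0 ≤ s) :
    ∫ u in (0 : ℝ)..s, heatIntegrand a u ≤ 32 / a * s := by
  calc ∫ u in (0 : ℝ)..s, heatIntegrand a u ≤ ∫ _ in (0 : ℝ)..s, 32 / a :=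
        intervalIntegral.integral_mono_on_of_le_Ioo hs (intervalIntegrable_heatIntegrand_zero ha hs)
          intervalIntegrable_const fun u hu => heatIntegrand_le_const ha hu.1
    _ = 32 / a * s := by rw [intervalIntegral.integral_const, smul_eq_mul, sub_zero, mul_comm]

lemma integral_heatIntegrand_le_log {a t : ℝ} (ha : 0 < a) (hat : a ≤ t) :
    ∫ u in a..t, heatIntegrand a u ≤ log (t / a) := by
  have ht : 0 < t := ha.trans_le hat
  calc ∫ u in a..t, heatIntegrand a u ≤ ∫ u in a..t, u⁻¹ :=
        intervalIntegral.integral_mono_on_of_le_Ioo hat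
          (intervalIntegrable_heatIntegrand ha ha.le ht.le)
          (intervalIntegral.intervalIntegrable_inv
            (fun u hu => (ha.trans_le (uIcc_of_le hat ▸ hu).1).ne') continuousOn_id)
          fun u hu => heatIntegrand_le_inv ha.le (ha.trans hu.1) hu.1.le
    _ = log (t / a) := integral_inv_of_pos ha ht

lemma integral_heatIntegrand_le {a t : ℝ} (ha : 0 < a) (ht : 0 < t) :
    ∫ u in (0 : ℝ)..t, heatIntegrand a u ≤ 32 * (1 + |log (a / t)|) := by
  have hlog := abs_nonneg (log (a / t))
  rcases le_or_gt t a with hta | hat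
  · calc ∫ u in (0 : ℝ)..t, heatIntegrand a u ≤ 32 / a * t :=
          integral_heatIntegrand_le_mul ha ht.le
      _ ≤ 32 := by
          rw [div_mul_comm]
          exact mul_le_of_le_one_left (by norm_num) ((div_le_one ha).mpr hta)
      _ ≤ 32 * (1 + |log (a / t)|) := by linarith
  · rw [← intervalIntegral.integral_add_adjacent_intervals
      (intervalIntegrable_heatIntegrand_zero ha ha.le)
      (intervalIntegrable_heatIntegrand ha ha.le ht.le)]
    calc (∫ u in (0 : ℝ)..a, heatIntegrand a u) + ∫ u in a..t, heatIntegrand a u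
        ≤ 32 / a * a + log (t / a) :=
          add_le_add (integral_heatIntegrand_le_mul ha ha.le)
            (integral_heatIntegrand_le_log ha hat.le)
      _ = 32 - log (a / t) := by rw [div_mul_cancel₀ _ ha.ne', ← inv_div, log_inv, sub_eq_add_neg]
      _ ≤ 32 * (1 + |log (a / t)|) := by linarith [neg_le_abs (log (a / t))]

theorem stmt5 :
    ∃ c : ℝ, 0 < c ∧ ∀ x t : ℝ, 0 < x → 0 < t →
      (∫ u in Ioo (0 : ℝ) t, u⁻¹ * Real.exp (-x ^ 2 / (4 * u)) * |1 - x ^ 2 / u|) ≤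
        c * (1 + |Real.log (x ^ 2 / t)|) := by
  refine ⟨32, by norm_num, fun x t hx ht => ?_⟩
  rw [← integral_Ioc_eq_integral_Ioo, ← intervalIntegral.integral_of_le ht.le]
  exact integral_heatIntegrand_le (by positivity) ht
end

section
/- Let 1 < p < ∞ and let 0 < a < 1 satisfy (1+a)(3−p)/2 < 1. Define g : (0,1) → ℝ by g(t) = Σ_{k=1}^∞ 1_{((2k+1)^{−a}, (2k)^{−a})}(t), the sum of the indicator functions of the disjoint intervals ((2k+1)^{−a}, (2k)^{−a}) for k ≥ 1. Then 0 ≤ g ≤ 1 on (0,1) (so g ∈ L^∞(0,1)), while the Gagliardo-type double integral diverges: ∫₀¹ ∫₀¹ |g(t) − g(s)|^p / |t − s|^{(1+p)/2} ds dt = ∞. -/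
open MeasureTheory Real Set

open Function

/-!
Write `x n = (n + 2)^(-a)`, so that `g = 1` on the gaps `I_k = (x (2k+1), x (2k))` and `g = 0` on
the gaps `J_k = (x (2k+2), x (2k+1))`. On `I_k × J_k` the integrand is at least `D_k^(-(1+p)/2)`,
where `D_k = x (2k) - x (2k+2)`. By the mean value theorem `|I_k|`, `|J_k|` and `D_k` are all of
order `k^(-1-a)`, so the rectangle `I_k × J_k` contributes at least a multiple of
`k^(-(1+a)(3-p)/2)`, and these contributions form a divergent series.
-/

lemma rpow_neg_sub_rpow_neg_bounds {a u v : ℝ} (ha : 0 ≤ a) (hu : 0 < u) (huv : u < v) :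
    a * v ^ (-a - 1) * (v - u) ≤ u ^ (-a) - v ^ (-a) ∧
      u ^ (-a) - v ^ (-a) ≤ a * u ^ (-a - 1) * (v - u) := by
  have hderiv : ∀ z : ℝ, 0 < z → HasDerivAt (fun z => z ^ (-a)) (-a * z ^ (-a - 1)) z :=
    fun z hz => hasDerivAt_rpow_const (Or.inl hz.ne')
  obtain ⟨c, ⟨huc, hcv⟩, hc⟩ := exists_hasDerivAt_eq_slope _ _ huv
    (fun z hz => (hderiv z (hu.trans_le hz.1)).continuousAt.continuousWithinAt)
    (fun z hz => hderiv z (hu.trans hz.1))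
  have hmvt : u ^ (-a) - v ^ (-a) = a * c ^ (-a - 1) * (v - u) := by
    rw [eq_div_iff (sub_pos.2 huv).ne'] at hc
    linear_combination hc
  have hvu : 0 ≤ v - u := (sub_pos.2 huv).le
  rw [hmvt]
  constructor <;> refine mul_le_mul_of_nonneg_right (mul_le_mul_of_nonneg_left ?_ ha) hvu
  · exact rpow_le_rpow_of_nonpos (hu.trans huc) hcv.le (by linarith)
  · exact rpow_le_rpow_of_nonpos hu huc.le (by linarith)

lemma le_rpow_neg_sub_rpow_neg_add_one {a n u : ℝ} (ha : 0 ≤ a) (hn : 0 < n) (hu : 0 < u)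
    (hun : u + 1 ≤ 4 * n) :
    a * 4 ^ (-a - 1) * n ^ (-a - 1) ≤ u ^ (-a) - (u + 1) ^ (-a) :=
  calc a * 4 ^ (-a - 1) * n ^ (-a - 1) = a * (4 * n) ^ (-a - 1) * 1 := by
        rw [mul_rpow (by norm_num) hn.le]; ring
    _ ≤ a * (u + 1) ^ (-a - 1) * ((u + 1) - u) := by
        rw [add_sub_cancel_left]
        refine mul_le_mul_of_nonneg_right (mul_le_mul_of_nonneg_left ?_ ha) zero_le_one
        exact rpow_le_rpow_of_nonpos (by linarith) hun (by linarith)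
    _ ≤ u ^ (-a) - (u + 1) ^ (-a) := (rpow_neg_sub_rpow_neg_bounds ha hu (by linarith)).1

lemma rpow_neg_gap_product_lower_bound {a q n : ℝ} (ha : 0 < a) (hq : 0 ≤ q) (hn : 1 ≤ n) :
    (a * 2 ^ (-a)) ^ (-q) * (a * 4 ^ (-a - 1)) ^ 2 * n ^ ((a + 1) * (q - 2)) ≤
      ((2 * n) ^ (-a) - (2 * n + 2) ^ (-a)) ^ (-q) *
        ((2 * n + 1) ^ (-a) - (2 * n + 2) ^ (-a)) * ((2 * n) ^ (-a) - (2 * n + 1) ^ (-a)) := by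
  have hn0 : 0 < n := by linarith
  have hJ := le_rpow_neg_sub_rpow_neg_add_one ha.le hn0 (u := 2 * n + 1) (by linarith) (by linarith)
  have hI := le_rpow_neg_sub_rpow_neg_add_one ha.le hn0 (u := 2 * n) (by linarith) (by linarith)
  rw [add_assoc, one_add_one_eq_two] at hJ
  have hD : (2 * n) ^ (-a) - (2 * n + 2) ^ (-a) ≤ a * 2 ^ (-a) * n ^ (-a - 1) := by
    calc (2 * n) ^ (-a) - (2 * n + 2) ^ (-a) ≤ a * (2 * n) ^ (-a - 1) * ((2 * n + 2) - 2 * n) :=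
          (rpow_neg_sub_rpow_neg_bounds ha.le (by linarith) (by linarith)).2
      _ = a * 2 ^ (-a) * n ^ (-a - 1) := by
          rw [mul_rpow (by norm_num) hn0.le, rpow_sub_one (by norm_num)]; ring
  have hD0 : 0 < (2 * n) ^ (-a) - (2 * n + 2) ^ (-a) :=
    sub_pos.2 (rpow_lt_rpow_of_neg (by linarith) (by linarith) (by linarith))
  have hDq : (a * 2 ^ (-a)) ^ (-q) * n ^ ((a + 1) * q) ≤
      ((2 * n) ^ (-a) - (2 * n + 2) ^ (-a)) ^ (-q) := by
    calc (a * 2 ^ (-a)) ^ (-q) * n ^ ((a + 1) * q) = (a * 2 ^ (-a) * n ^ (-a - 1)) ^ (-q) := by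
          rw [mul_rpow (x := a * 2 ^ (-a)) (by positivity) (by positivity), ← rpow_mul hn0.le,
            neg_sub_left, neg_mul_neg, add_comm 1 a]
      _ ≤ _ := rpow_le_rpow_of_nonpos hD0 hD (by linarith)
  calc (a * 2 ^ (-a)) ^ (-q) * (a * 4 ^ (-a - 1)) ^ 2 * n ^ ((a + 1) * (q - 2))
      = (a * 2 ^ (-a)) ^ (-q) * n ^ ((a + 1) * q) * ((a * 4 ^ (-a - 1)) * n ^ (-a - 1)) *
          ((a * 4 ^ (-a - 1)) * n ^ (-a - 1)) := by
        rw [show (a + 1) * (q - 2) = (a + 1) * q + (-a - 1) + (-a - 1) by ring,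
          rpow_add hn0, rpow_add hn0]
        ring
    _ ≤ _ := by
        have hJ0 : 0 ≤ (2 * n + 1) ^ (-a) - (2 * n + 2) ^ (-a) :=
          (by positivity : (0 : ℝ) ≤ a * 4 ^ (-a - 1) * n ^ (-a - 1)).trans hJ
        gcongr

lemma tsum_mul_measure_le_lintegral_lintegral {ι α β : Type*} [Countable ι] [MeasurableSpace α]
    [MeasurableSpace β] {μ : Measure α} {ν : Measure β} {S : Set α} {T : Set β}
    {I : ι → Set α} {J : ι → Set β} {c : ι → ENNReal} {F : α → β → ENNReal}
    (hI : ∀ k, MeasurableSet (I k)) (hJ : ∀ k, MeasurableSet (J k))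
    (hdisj : Pairwise (Disjoint on I)) (hIS : ∀ k, I k ⊆ S) (hJT : ∀ k, J k ⊆ T)
    (hF : ∀ k, ∀ t ∈ I k, ∀ s ∈ J k, c k ≤ F t s) :
    ∑' k, c k * ν (J k) * μ (I k) ≤ ∫⁻ t in S, ∫⁻ s in T, F t s ∂ν ∂μ := by
  have hinner : ∀ k, ∀ t ∈ I k, c k * ν (J k) ≤ ∫⁻ s in T, F t s ∂ν := fun k t ht =>
    calc c k * ν (J k) = ∫⁻ _ in J k, c k ∂ν := (setLIntegral_const _ _).symm
      _ ≤ ∫⁻ s in J k, F t s ∂ν := setLIntegral_mono' (hJ k) (hF k t ht)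
      _ ≤ ∫⁻ s in T, F t s ∂ν := lintegral_mono_set (hJT k)
  calc ∑' k, c k * ν (J k) * μ (I k) = ∑' k, ∫⁻ _ in I k, c k * ν (J k) ∂μ := by
        simp only [setLIntegral_const]
    _ ≤ ∑' k, ∫⁻ t in I k, ∫⁻ s in T, F t s ∂ν ∂μ :=
        ENNReal.tsum_le_tsum fun k => setLIntegral_mono' (hI k) (hinner k)
    _ = ∫⁻ t in ⋃ k, I k, ∫⁻ s in T, F t s ∂ν ∂μ := (lintegral_iUnion hI hdisj _).symm
    _ ≤ ∫⁻ t in S, ∫⁻ s in T, F t s ∂ν ∂μ := lintegral_mono_set (iUnion_subset hIS)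

def gap (x : ℕ → ℝ) (n : ℕ) : Set ℝ := Ioo (x (n + 1)) (x n)

section Gaps

variable {x : ℕ → ℝ}

lemma Antitone.pairwise_disjoint_gap (hx : Antitone x) : Pairwise (Disjoint on gap x) :=
  hx.pairwise_disjoint_on_Ioo_succ

lemma Antitone.pairwise_disjoint_even_gap (hx : Antitone x) :
    Pairwise (Disjoint on fun k => gap x (2 * k)) :=
  hx.pairwise_disjoint_gap.comp_of_injective fun _ _ h => by simpa using h

lemma gap_subset_Ioo_zero_one (hx : Antitone x) (hx0 : ∀ n, 0 ≤ x n) (hx1 : x 0 ≤ 1) (n : ℕ) :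
    gap x n ⊆ Ioo 0 1 :=
  Ioo_subset_Ioo (hx0 _) (hx (Nat.zero_le n) |>.trans hx1)

lemma notMem_iUnion_even_gap (hx : Antitone x) {k : ℕ} {t : ℝ} (ht : t ∈ gap x (2 * k + 1)) :
    t ∉ ⋃ j, gap x (2 * j) := by
  simp only [mem_iUnion, not_exists]
  intro j hj
  exact disjoint_left.1 (hx.pairwise_disjoint_gap (i := 2 * j) (j := 2 * k + 1) (by omega)) hj ht

lemma tsum_gap_le_lintegral_lintegral (hx : Antitone x) (hx0 : ∀ n, 0 ≤ x n) (hx1 : x 0 ≤ 1)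
    {g : ℝ → ℝ} (hg1 : ∀ k, ∀ t ∈ gap x (2 * k), g t = 1)
    (hg0 : ∀ k, ∀ t ∈ gap x (2 * k + 1), g t = 0) (p : ℝ) {q : ℝ} (hq : 0 ≤ q) :
    ∑' k, ENNReal.ofReal ((x (2 * k) - x (2 * k + 2)) ^ (-q) *
        (x (2 * k + 1) - x (2 * k + 2)) * (x (2 * k) - x (2 * k + 1))) ≤
      ∫⁻ t in Ioo 0 1, ∫⁻ s in Ioo 0 1, ENNReal.ofReal (|g t - g s| ^ p / |t - s| ^ q) := by
  have hD : ∀ k, 0 ≤ x (2 * k) - x (2 * k + 2) := fun k => sub_nonneg.2 (hx (by omega))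
  have hJ : ∀ k, 0 ≤ x (2 * k + 1) - x (2 * k + 2) := fun k => sub_nonneg.2 (hx (by omega))
  have hvol : ∀ n, volume (gap x n) = ENNReal.ofReal (x n - x (n + 1)) := fun n => volume_Ioo
  calc _ = ∑' k, ENNReal.ofReal ((x (2 * k) - x (2 * k + 2)) ^ (-q)) *
        volume (gap x (2 * k + 1)) * volume (gap x (2 * k)) := by
        refine tsum_congr fun k => ?_
        rw [hvol, hvol, ← ENNReal.ofReal_mul (rpow_nonneg (hD k) _),
          ← ENNReal.ofReal_mul (mul_nonneg (rpow_nonneg (hD k) _) (hJ k))]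
    _ ≤ _ := tsum_mul_measure_le_lintegral_lintegral (fun _ => measurableSet_Ioo)
        (fun _ => measurableSet_Ioo)
        hx.pairwise_disjoint_even_gap (fun k => gap_subset_Ioo_zero_one hx hx0 hx1 (2 * k))
        (fun k => gap_subset_Ioo_zero_one hx hx0 hx1 (2 * k + 1)) ?_
  · intro k t ht s hs
    have hts : 0 < t - s := by linarith [ht.1, hs.2]
    have htsD : t - s ≤ x (2 * k) - x (2 * k + 2) := by linarith [ht.2, hs.1]
    rw [hg1 k t ht, hg0 k s hs, sub_zero, abs_one, one_rpow, abs_of_pos hts, one_div,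
      ← rpow_neg hts.le]
    exact ENNReal.ofReal_le_ofReal (rpow_le_rpow_of_nonpos hts htsD (neg_nonpos.2 hq))

end Gaps

lemma tsum_ofReal_mul_rpow_eq_top {C r : ℝ} (hC : 0 < C) (hr : r ≤ 1) :
    ∑' k : ℕ, ENNReal.ofReal (C * ((k : ℝ) + 1) ^ (-r)) = ⊤ := by
  by_contra h
  have hsum : Summable fun k : ℕ => C * ((k : ℝ) + 1) ^ (-r) :=
    (ENNReal.summable_toReal h).congr fun k => ENNReal.toReal_ofReal (by positivity)
  have : Summable fun k : ℕ => 1 / |(k : ℝ) + 1| ^ r := by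
    refine (hsum.mul_left C⁻¹).congr fun k => ?_
    rw [abs_of_pos (by positivity), rpow_neg (by positivity), inv_mul_cancel_left₀ hC.ne', one_div]
  linarith [(Real.summable_one_div_nat_add_rpow 1 r).1 this]

theorem stmt7_general (p a : ℝ) (hp : 1 < p) (ha0 : 0 < a)
    (hpa : (1 + a) * (3 - p) / 2 < 1)
    (g : ℝ → ℝ)
    (hg : ∀ t : ℝ, g t = ∑' k : ℕ,
      (Ioo ((2 * (k : ℝ) + 3) ^ (-a)) ((2 * (k : ℝ) + 2) ^ (-a))).indicator
        (fun _ => (1 : ℝ)) t) :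
    (∀ t ∈ Ioo (0 : ℝ) 1, 0 ≤ g t ∧ g t ≤ 1) ∧
    (∫⁻ t in Ioo (0 : ℝ) 1, ∫⁻ s in Ioo (0 : ℝ) 1,
        ENNReal.ofReal (|g t - g s| ^ p / |t - s| ^ ((1 + p) / 2))) = ⊤ := by
  set x : ℕ → ℝ := fun n => ((n : ℝ) + 2) ^ (-a) with hx_def
  have hx : Antitone x := fun m n hmn =>
    rpow_le_rpow_of_nonpos (by positivity) (by gcongr) (by linarith)
  have hx_at : ∀ k : ℕ, x (2 * k) = (2 * ((k : ℝ) + 1)) ^ (-a) ∧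
      x (2 * k + 1) = (2 * ((k : ℝ) + 1) + 1) ^ (-a) ∧
      x (2 * k + 2) = (2 * ((k : ℝ) + 1) + 2) ^ (-a) := fun k => by
    simp only [hx_def]; push_cast; refine ⟨?_, ?_, ?_⟩ <;> ring_nf
  have hE : ∀ k : ℕ, Ioo ((2 * (k : ℝ) + 3) ^ (-a)) ((2 * (k : ℝ) + 2) ^ (-a)) = gap x (2 * k) :=
    fun k => by rw [gap, (hx_at k).1, (hx_at k).2.1]; ring_nf
  have hg_eq : g = (⋃ k, gap x (2 * k)).indicator (fun _ => 1) := by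
    rw [indicator_iUnion_of_pairwise_disjoint _ hx.pairwise_disjoint_even_gap]
    ext t
    simp only [hg, hE]
  refine ⟨fun t _ => ?_, ?_⟩
  · rw [hg_eq]
    by_cases ht : t ∈ ⋃ k, gap x (2 * k) <;> simp [ht]
  have hq : 0 ≤ (1 + p) / 2 := by linarith
  have hC : 0 < (a * 2 ^ (-a)) ^ (-((1 + p) / 2)) * (a * 4 ^ (-a - 1)) ^ 2 := by positivity
  have hterm : ∀ k : ℕ, (a * 2 ^ (-a)) ^ (-((1 + p) / 2)) * (a * 4 ^ (-a - 1)) ^ 2 *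
      ((k : ℝ) + 1) ^ (-((1 + a) * (3 - p) / 2)) ≤
        (x (2 * k) - x (2 * k + 2)) ^ (-((1 + p) / 2)) * (x (2 * k + 1) - x (2 * k + 2)) *
          (x (2 * k) - x (2 * k + 1)) := fun k => by
    obtain ⟨h0, h1, h2⟩ := hx_at k
    rw [h0, h1, h2]
    convert rpow_neg_gap_product_lower_bound ha0 hq (n := (k : ℝ) + 1) (by simp) using 3
    ring
  refine eq_top_iff.2 ?_
  rw [← tsum_ofReal_mul_rpow_eq_top hC hpa.le]
  refine (ENNReal.tsum_le_tsum fun k => ENNReal.ofReal_le_ofReal (hterm k)).trans ?_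
  exact tsum_gap_le_lintegral_lintegral hx (fun n => by positivity)
    (rpow_le_one_of_one_le_of_nonpos (by norm_num) (by linarith))
    (fun k t ht => by rw [hg_eq, indicator_of_mem (mem_iUnion_of_mem k ht)])
    (fun k t ht => by rw [hg_eq, indicator_of_notMem (notMem_iUnion_even_gap hx ht)]) p hq

theorem stmt7 (p a : ℝ) (hp : 1 < p) (ha0 : 0 < a) (ha1 : a < 1)
    (hpa : (1 + a) * (3 - p) / 2 < 1)
    (g : ℝ → ℝ)
    (hg : ∀ t : ℝ, g t = ∑' k : ℕ,
      (Ioo ((2 * (k : ℝ) + 3) ^ (-a)) ((2 * (k : ℝ) + 2) ^ (-a))).indicator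
        (fun _ => (1 : ℝ)) t) :
    (∀ t ∈ Ioo (0 : ℝ) 1, 0 ≤ g t ∧ g t ≤ 1) ∧
    (∫⁻ t in Ioo (0 : ℝ) 1, ∫⁻ s in Ioo (0 : ℝ) 1,
        ENNReal.ofReal (|g t - g s| ^ p / |t - s| ^ ((1 + p) / 2))) = ⊤ :=
  stmt7_general p a hp ha0 hpa g hg
end

section
/- Let q > 1 and r > 3q/2 be real numbers. Define g : (3/4, 7/8) → ℝ by g(t) = (t − 3/4)^{1 − 1/q} · ( log( 1/(t − 3/4) ) )^{−1}. Then the Gagliardo-type double integral diverges: ∫_{3/4}^{7/8} ∫_{3/4}^{7/8} |g(t) − g(s)|^r / |t − s|^{r + 1/2} ds dt = ∞. -/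
/-!
Write `v = t - 3/4` and `L = log v⁻¹`, so `g t = v ^ α / L` with `α = 1 - 1/q`.
For `s - 3/4 < v/2` the value `g s` is at most `2 ^ (-α) g t`, so `|g t - g s| ≳ v ^ α / L` and
`|t - s| ≤ v` on a set of `s` of measure `v / 2`. Hence the inner integral is
`≳ v ^ (α r - r + 1/2) / L ^ r = v⁻¹ / (v ^ ε L ^ r)` with `ε = r/q - 3/2 > 0`.
This dominates `v⁻¹` for small `v` since `v ^ ε L ^ r → 0`, and `v⁻¹` is
not integrable at `0`.
-/

open MeasureTheory Real Set Filter Topology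

lemma lintegral_Ioo_inv_sub_eq_top {a b : ℝ} (hab : a < b) :
    ∫⁻ x in Ioo a b, ENNReal.ofReal (x - a)⁻¹ = ⊤ := by
  by_contra h
  have hint : IntegrableOn (fun x => (x - a)⁻¹) (Ioo a b) := by
    refine (lintegral_ofReal_ne_top_iff_integrable (by fun_prop) ?_).1 h
    filter_upwards [ae_restrict_mem measurableSet_Ioo] with x hx
    exact inv_nonneg.2 (sub_nonneg.2 hx.1.le)
  rw [← intervalIntegrable_iff_integrableOn_Ioo_of_le hab.le, intervalIntegrable_sub_inv_iff]
    at hint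
  exact hint.elim hab.ne (· left_mem_uIcc)

lemma tendsto_rpow_mul_log_inv_rpow_nhdsGT_zero {ε : ℝ} (hε : 0 < ε) (r : ℝ) :
    Tendsto (fun v => v ^ ε * log v⁻¹ ^ r) (𝓝[>] 0) (𝓝 0) := by
  refine ((isLittleO_log_rpow_rpow_atTop r hε).tendsto_div_nhds_zero.comp
    tendsto_inv_nhdsGT_zero).congr' ?_
  filter_upwards [self_mem_nhdsWithin] with v (hv : 0 < v)
  simp [inv_rpow hv.le, div_eq_mul_inv, mul_comm]

noncomputable def logProfile (α x : ℝ) : ℝ := x ^ α * (log x⁻¹)⁻¹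

lemma logProfile_nonneg {α x : ℝ} (hx0 : 0 ≤ x) (hx1 : x ≤ 1) : 0 ≤ logProfile α x :=
  mul_nonneg (rpow_nonneg hx0 _) (inv_nonneg.2 (log_inv x ▸ neg_nonneg.2 (log_nonpos hx0 hx1)))

lemma one_sub_inv_two_rpow_pos {α : ℝ} (hα : 0 < α) : 0 < 1 - ((2 : ℝ) ^ α)⁻¹ :=
  sub_pos.2 (inv_lt_one_of_one_lt₀ (one_lt_rpow one_lt_two hα))

lemma logProfile_le_of_le_half {α u v : ℝ} (hα : 0 ≤ α) (hu : 0 < u) (huv : u ≤ v / 2)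
    (hv : v < 1) : logProfile α u ≤ (2 ^ α)⁻¹ * logProfile α v := by
  have hv0 : 0 < v := by linarith
  have hlog_v : 0 < log v⁻¹ := log_pos (one_lt_inv₀ hv0 |>.2 hv)
  have hlog : log v⁻¹ ≤ log u⁻¹ := log_le_log (by positivity) (inv_anti₀ hu (by linarith))
  calc u ^ α * (log u⁻¹)⁻¹ ≤ (v / 2) ^ α * (log v⁻¹)⁻¹ :=
        mul_le_mul (rpow_le_rpow hu.le huv hα) (inv_anti₀ hlog_v hlog)
          (inv_nonneg.2 (hlog_v.trans_le hlog).le) (by positivity)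
    _ = (2 ^ α)⁻¹ * (v ^ α * (log v⁻¹)⁻¹) := by
        rw [div_rpow hv0.le zero_le_two]; ring

lemma eventually_inv_le_logProfile_rpow {α r p : ℝ} (hα : 0 < α) (hp : α * r + 2 < p) :
    ∀ᶠ v in 𝓝[>] 0, v⁻¹ ≤ ((1 - (2 ^ α)⁻¹) * logProfile α v) ^ r / v ^ p * (v / 2) := by
  set κ := 1 - ((2 : ℝ) ^ α)⁻¹
  have hκ : 0 < κ := one_sub_inv_two_rpow_pos hα
  set ε := p - α * r - 2
  have hsmall := (tendsto_rpow_mul_log_inv_rpow_nhdsGT_zero (ε := ε) (by linarith) r).eventually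
    (gt_mem_nhds (half_pos (rpow_pos_of_pos hκ r)))
  filter_upwards [hsmall, Ioo_mem_nhdsGT one_pos] with v hsmall ⟨hv0, hv1⟩
  have hL : 0 < log v⁻¹ := log_pos (one_lt_inv₀ hv0 |>.2 hv1)
  have hvε : 0 < v ^ ε * log v⁻¹ ^ r := by positivity
  have hsplit : ((κ * logProfile α v) ^ r / v ^ p * (v / 2))
      = κ ^ r / 2 / (v ^ ε * log v⁻¹ ^ r) * v⁻¹ := by
    rw [show p = α * r + 2 + ε by ring, rpow_add hv0, rpow_add hv0, rpow_two, logProfile,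
      mul_rpow hκ.le (by positivity), mul_rpow (by positivity) (by positivity),
      ← rpow_mul hv0.le, inv_rpow hL.le]
    field_simp
  rw [hsplit]
  exact le_mul_of_one_le_left (by positivity) ((one_le_div hvε).2 hsmall.le)

section LogProfile

variable {a b α r p : ℝ} {g : ℝ → ℝ}

lemma le_rpow_abs_sub_div_rpow (hg : ∀ t ∈ Ioo a b, g t = logProfile α (t - a)) (hα : 0 < α)
    (hr : 0 ≤ r) (hp : 0 ≤ p) {t s : ℝ} (ht : t ∈ Ioo a b) (ht1 : t - a < 1)
    (hs : s ∈ Ioo a (a + (t - a) / 2)) :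
    ((1 - (2 ^ α)⁻¹) * logProfile α (t - a)) ^ r / (t - a) ^ p
      ≤ |g t - g s| ^ r / |t - s| ^ p := by
  obtain ⟨has, hst⟩ := hs
  have hgs : g s ≤ (2 ^ α)⁻¹ * g t := by
    rw [hg s ⟨has, by linarith [ht.2]⟩, hg t ht]
    exact logProfile_le_of_le_half hα.le (by linarith) (by linarith) ht1
  have hgt : 0 ≤ g t := hg t ht ▸ logProfile_nonneg (by linarith [ht.1]) ht1.le
  have hts : 0 < t - s := by linarith
  rw [← hg t ht]
  refine div_le_div₀ (by positivity) (rpow_le_rpow ?_ ?_ hr) (by positivity)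
    (rpow_le_rpow (abs_nonneg _) ?_ hp)
  · exact mul_nonneg (one_sub_inv_two_rpow_pos hα).le hgt
  · exact (by linarith : (1 - (2 ^ α)⁻¹) * g t ≤ g t - g s).trans (le_abs_self _)
  · rw [abs_of_pos hts]; linarith

lemma le_lintegral_rpow_abs_sub_div_rpow (hg : ∀ t ∈ Ioo a b, g t = logProfile α (t - a))
    (hα : 0 < α) (hr : 0 ≤ r) (hp : 0 ≤ p) {t : ℝ} (ht : t ∈ Ioo a b) (ht1 : t - a < 1) :
    ENNReal.ofReal (((1 - (2 ^ α)⁻¹) * logProfile α (t - a)) ^ r / (t - a) ^ p * ((t - a) / 2))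
      ≤ ∫⁻ s in Ioo a b, ENNReal.ofReal (|g t - g s| ^ r / |t - s| ^ p) := by
  set c := ((1 - (2 ^ α)⁻¹) * logProfile α (t - a)) ^ r / (t - a) ^ p
  have hta : 0 ≤ t - a := by linarith [ht.1]
  have hc : 0 ≤ c := div_nonneg (rpow_nonneg (mul_nonneg (one_sub_inv_two_rpow_pos hα).le
    (logProfile_nonneg hta ht1.le)) _) (rpow_nonneg hta _)
  calc ENNReal.ofReal (c * ((t - a) / 2))
      = ∫⁻ _ in Ioo a (a + (t - a) / 2), ENNReal.ofReal c := by
        rw [setLIntegral_const, volume_Ioo, add_sub_cancel_left, ENNReal.ofReal_mul hc]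
    _ ≤ ∫⁻ s in Ioo a (a + (t - a) / 2), ENNReal.ofReal (|g t - g s| ^ r / |t - s| ^ p) :=
        setLIntegral_mono' measurableSet_Ioo fun s hs =>
          ENNReal.ofReal_le_ofReal (le_rpow_abs_sub_div_rpow hg hα hr hp ht ht1 hs)
    _ ≤ _ := lintegral_mono_set (Ioo_subset_Ioo_right (by linarith [ht.2]))

theorem lintegral_lintegral_rpow_abs_sub_div_rpow_eq_top
    (hg : ∀ t ∈ Ioo a b, g t = logProfile α (t - a)) (hab : a < b) (hα : 0 < α) (hr : 0 ≤ r)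
    (hp : α * r + 2 < p) :
    ∫⁻ t in Ioo a b, ∫⁻ s in Ioo a b, ENNReal.ofReal (|g t - g s| ^ r / |t - s| ^ p) = ⊤ := by
  obtain ⟨δ, hδ, hsub⟩ :=
    mem_nhdsGT_iff_exists_Ioo_subset.1 (eventually_inv_le_logProfile_rpow hα hp)
  obtain ⟨ρ, hρ, hρδ, hρ1, hρb⟩ : ∃ ρ, 0 < ρ ∧ ρ ≤ δ ∧ ρ ≤ 1 ∧ ρ ≤ b - a :=
    ⟨_, lt_min hδ (lt_min one_pos (sub_pos.2 hab)), min_le_left _ _,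
      (min_le_right _ _).trans (min_le_left _ _), (min_le_right _ _).trans (min_le_right _ _)⟩
  have hp0 : 0 ≤ p := by nlinarith
  rw [eq_top_iff, ← lintegral_Ioo_inv_sub_eq_top (lt_add_of_pos_right a hρ)]
  calc ∫⁻ t in Ioo a (a + ρ), ENNReal.ofReal (t - a)⁻¹
      ≤ ∫⁻ t in Ioo a (a + ρ), ∫⁻ s in Ioo a b,
          ENNReal.ofReal (|g t - g s| ^ r / |t - s| ^ p) := by
        refine setLIntegral_mono' measurableSet_Ioo fun t ⟨hat, htρ⟩ => ?_
        refine (ENNReal.ofReal_le_ofReal (hsub ⟨?_, ?_⟩)).trans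
          (le_lintegral_rpow_abs_sub_div_rpow hg hα hr hp0 ⟨hat, ?_⟩ ?_) <;> linarith
    _ ≤ _ := lintegral_mono_set (Ioo_subset_Ioo_right (by linarith))

end LogProfile

theorem stmt11 (q r : ℝ) (hq : 1 < q) (hr : 3 * q / 2 < r)
    (g : ℝ → ℝ)
    (hg : ∀ t : ℝ, g t = (t - 3 / 4) ^ (1 - 1 / q) * (Real.log (1 / (t - 3 / 4)))⁻¹) :
    (∫⁻ t in Ioo (3 / 4 : ℝ) (7 / 8), ∫⁻ s in Ioo (3 / 4 : ℝ) (7 / 8),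
        ENNReal.ofReal (|g t - g s| ^ r / |t - s| ^ (r + 1 / 2))) = ⊤ := by
  have hq0 : 0 < q := by linarith
  have hrq : 3 / 2 < r / q := (lt_div_iff₀ hq0).2 (by linarith)
  refine lintegral_lintegral_rpow_abs_sub_div_rpow_eq_top (α := 1 - 1 / q)
    (fun t _ => by rw [hg t, logProfile, one_div (t - 3 / 4)]) (by norm_num) ?_ (by linarith) ?_
  · have : 1 / q < 1 := (div_lt_one hq0).2 hq
    linarith
  · have : (1 - 1 / q) * r = r - r / q := by field_simp
    linarith
end
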